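/- arXiv:1908.04471 — 5 statements merged into one kernel-verified Lean document; each statement's English description precedes it below -/
import Mathlib

section
/- Let a ∈ ℐ be an inner index with dimension θ(a) = 1. Then the representable set 𝕋_V(θ) equals the representable set 𝕋_{V⊖a}(θ'), where V⊖a = (v_1 \ {a}, …, v_M \ {a}) is obtained by deleting a from every vertex, the inner index set becomes ℐ \ {a}, and θ' is the restriction of θ to ι \ {a}. -/
noncomputable section

/-- The space of real tensors indexed by the indices in the vertex `v`, where an index
`a` (either outer, in `ιO`, or inner, in `ιI`) has dimension `Sum.elim θO θI a`. -/
def Tensor {ιO ιI : Type*} (θO : ιO → ℕ) (θI : ιI → ℕ) (v : Finset (ιO ⊕ ιI)) : Type _ :=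
  ((a : v) → Fin (Sum.elim θO θI a.1)) → ℝ

/-- The combined assignment of an outer assignment `x` and an inner assignment `y`. -/
def combine {ιO ιI : Type*} (θO : ιO → ℕ) (θI : ιI → ℕ)
    (x : (a : ιO) → Fin (θO a)) (y : (a : ιI) → Fin (θI a)) :
    (a : ιO ⊕ ιI) → Fin (Sum.elim θO θI a)
  | .inl o => x o
  | .inr i => y i

/-- The contraction `F_V` of the tensors `U m` along the vertex list `V`:
`F_V(U)(x) = Σ_y Π_m U m ((x,y)|_{V m})`. -/
def contract {ιO ιI : Type*} [Fintype ιO] [Fintype ιI] [DecidableEq ιO] [DecidableEq ιI]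
    (θO : ιO → ℕ) (θI : ιI → ℕ) {κ : Type*} [Fintype κ]
    (V : κ → Finset (ιO ⊕ ιI)) (U : (m : κ) → Tensor θO θI (V m)) :
    ((a : ιO) → Fin (θO a)) → ℝ :=
  fun x => ∑ y : (a : ιI) → Fin (θI a), ∏ m, U m (fun a => combine θO θI x y a.1)

/-- The representable set `𝕋_V(θ)`: the image of the contraction map `F_V`. -/
def reprSet {ιO ιI : Type*} [Fintype ιO] [Fintype ιI] [DecidableEq ιO] [DecidableEq ιI]
    (θO : ιO → ℕ) (θI : ιI → ℕ) {κ : Type*} [Fintype κ] (V : κ → Finset (ιO ⊕ ιI)) :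
    Set (((a : ιO) → Fin (θO a)) → ℝ) :=
  Set.range (contract θO θI V)

end

/-! Since `Fin 1` has a single element, an inner assignment is determined by its restriction to
`ιI \ {a}`, and likewise an assignment of `v_m` by its restriction to `v_m \ {a}`. Restricting
(resp. extending by the unique value at `a`) turns tensors of one network into tensors of the
other with the same contraction, the sums over inner assignments being reindexed term by term. -/

/-- The vertex list `V ⊖ a`, over the inner indices `ιI \ {a}`. -/
def eraseInner {ιO ιI κ : Type*} [Fintype ιO] [Fintype ιI] [DecidableEq ιO] [DecidableEq ιI]
    (V : κ → Finset (ιO ⊕ ιI)) (a : ιI) (m : κ) : Finset (ιO ⊕ {x : ιI // x ≠ a}) :=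
  Finset.univ.filter fun b => Sum.map id Subtype.val b ∈ V m

section Reindex

variable {ιO ιI ιI' κ : Type*} [Fintype ιO] [Fintype ιI] [Fintype ιI'] [Fintype κ]
  [DecidableEq ιO] [DecidableEq ιI] [DecidableEq ιI'] (θO : ιO → ℕ) {θI : ιI → ℕ} {θI' : ιI' → ℕ}
  {V : κ → Finset (ιO ⊕ ιI)} {V' : κ → Finset (ιO ⊕ ιI')}

theorem reprSet_subset_of_reindex (e : ((i : ιI') → Fin (θI' i)) ≃ ((i : ιI) → Fin (θI i)))
    (φ : ∀ m, ((c : V' m) → Fin (Sum.elim θO θI' c.1)) → (c : V m) → Fin (Sum.elim θO θI c.1))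
    (hφ : ∀ m x y, φ m (fun c : V' m => combine θO θI' x y c.1) =
      fun c : V m => combine θO θI x (e y) c.1) :
    reprSet θO θI V ⊆ reprSet θO θI' V' := by
  rintro _ ⟨U, rfl⟩
  refine ⟨fun m => U m ∘ φ m, funext fun x => ?_⟩
  refine Fintype.sum_equiv e _ _ fun y => Finset.prod_congr rfl fun m _ => ?_
  exact congrArg (U m) (hφ m x y)

end Reindex

section EraseInner

variable {ιO ιI κ : Type*} [Fintype ιO] [Fintype ιI] [DecidableEq ιO] [DecidableEq ιI]
  (θO : ιO → ℕ) (θI : ιI → ℕ) (V : κ → Finset (ιO ⊕ ιI)) {a : ιI} (m : κ)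

def extendAsg (ha : θI a = 1)
    (w : (b : eraseInner V a m) → Fin (Sum.elim θO (fun b => θI b.1) b.1)) :
    (c : V m) → Fin (Sum.elim θO θI c.1)
  | ⟨.inl o, hc⟩ => w ⟨.inl o, by simpa [eraseInner] using hc⟩
  | ⟨.inr i, hc⟩ =>
    if h : i = a then ⟨0, by simp [h, ha]⟩ else w ⟨.inr ⟨i, h⟩, by simpa [eraseInner] using hc⟩

def restrictAsg (z : (c : V m) → Fin (Sum.elim θO θI c.1)) :
    (b : eraseInner V a m) → Fin (Sum.elim θO (fun b => θI b.1) b.1)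
  | ⟨.inl o, hb⟩ => z ⟨.inl o, by simpa [eraseInner] using hb⟩
  | ⟨.inr i, hb⟩ => z ⟨.inr i.1, by simpa [eraseInner] using hb⟩

theorem extendAsg_combine (ha : θI a = 1) (x : (o : ιO) → Fin (θO o))
    (y : (i : ιI) → Fin (θI i)) :
    extendAsg θO θI V m ha (fun b => combine θO _ x (fun i => y i.1) b.1) =
      fun c : V m => combine θO θI x y c.1 := by
  funext ⟨c, hc⟩
  rcases c with o | i
  · rfl
  · by_cases h : i = a
    · have : Subsingleton (Fin (θI i)) := by rw [h, ha]; infer_instance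
      exact Subsingleton.elim (α := Fin (θI i)) _ _
    · simp [extendAsg, combine, h]

theorem restrictAsg_combine (x : (o : ιO) → Fin (θO o)) (y : (i : ιI) → Fin (θI i)) :
    restrictAsg θO θI V m (fun c => combine θO θI x y c.1) =
      fun b : eraseInner V a m => combine θO _ x (fun i => y i.1) b.1 := by
  funext ⟨b, hb⟩
  rcases b with o | i <;> rfl

end EraseInner

/-- Proposition 1, rank-one inner index elimination: if an inner index
`a` has dimension `θI a = 1`, then the representable set `𝕋_V(θ)` equals the representable
set of the vertex list `V ⊖ a` obtained by deleting `a` from every vertex, over the inner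
index set `ιI \ {a}` with `θ` restricted to it. -/
theorem reprSet_eq_of_dim_one {ιO ιI : Type*} [Fintype ιO] [Fintype ιI]
    [DecidableEq ιO] [DecidableEq ιI]
    (θO : ιO → ℕ) (θI : ιI → ℕ) {M : ℕ} (V : Fin M → Finset (ιO ⊕ ιI))
    (a : ιI) (ha : θI a = 1) :
    reprSet θO θI V =
      reprSet θO (fun b : {x : ιI // x ≠ a} => θI b.1)
        (fun m => Finset.univ.filter
          (fun b : ιO ⊕ {x : ιI // x ≠ a} => Sum.map id Subtype.val b ∈ V m)) := by
  have : Unique (Fin (θI a)) := (finCongr ha).unique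
  let e := (Equiv.piSplitAt a fun i => Fin (θI i)).trans (Equiv.uniqueProd _ _)
  refine (reprSet_subset_of_reindex θO e.symm (extendAsg θO θI V · ha) fun m x y => ?_).antisymm
    (reprSet_subset_of_reindex θO e (restrictAsg θO θI V) (restrictAsg_combine θO θI V))
  obtain ⟨y, rfl⟩ := e.surjective y
  rw [e.symm_apply_apply]
  exact extendAsg_combine θO θI V m ha x y
end

section
/- Suppose m ≠ n and v_m ⊆ v_n. Define the broadcast product U_m ⊙ U_n : (∏_{a ∈ v_n} Fin (θ a)) → ℝ by (U_m ⊙ U_n)(x) = U_m(x|_{v_m}) · U_n(x). Then for all tensors U_1, …, U_M, F_V(U_1, …, U_M) = F_{V'}(U_1, …, U_{m-1}, U_{m+1}, …, U_{n-1}, U_m ⊙ U_n, U_{n+1}, …, U_M), where V' is the vertex list V with the vertex v_m removed (and U_m ⊙ U_n placed at the position of v_n). -/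
/-- The broadcast product `U_m ⊙ U_n` of a tensor on `v` and a tensor on `w ⊇ v`:
`(U_m ⊙ U_n)(x) = U_m(x|_v) · U_n(x)`. -/
def broadcastProd {ιO ιI : Type*} (θO : ιO → ℕ) (θI : ιI → ℕ)
    {v w : Finset (ιO ⊕ ιI)} (hsub : v ⊆ w)
    (Um : Tensor θO θI v) (Un : Tensor θO θI w) : Tensor θO θI w :=
  fun x => Um (fun a => x ⟨a.1, hsub a.2⟩) * Un x

/-- if `m ≠ n` and `V m ⊆ V n`, then for all tensors `U`, the contraction
`F_V(U_1, …, U_M)` equals the contraction along the vertex list with `V m` removed, where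
the broadcast product `U_m ⊙ U_n` is placed at the position of `V n` and all other
tensors are unchanged. -/
theorem contract_eq_broadcast {ιO ιI : Type*} [Fintype ιO] [Fintype ιI]
    [DecidableEq ιO] [DecidableEq ιI]
    (θO : ιO → ℕ) (θI : ιI → ℕ) {M : ℕ} (V : Fin M → Finset (ιO ⊕ ιI))
    (m n : Fin M) (hmn : m ≠ n) (hsub : V m ⊆ V n)
    (U : (k : Fin M) → Tensor θO θI (V k)) :
    contract θO θI V U =
      contract θO θI (fun k : {k : Fin M // k ≠ m} => V k.1)
        (fun k =>
          if h : k.1 = n then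
            cast (show Tensor θO θI (V n) = Tensor θO θI (V k.1) by rw [h])
              (broadcastProd θO θI hsub (U m) (U n))
          else U k.1) := by

  funext x
  unfold contract
  apply Finset.sum_congr rfl
  intro y _
  set f : Fin M → ℝ := fun k => U k (fun a => combine θO θI x y a.1) with hf
  have hstep : ∀ k : {k : Fin M // k ≠ m},
      (if h : k.1 = n then
          cast (show Tensor θO θI (V n) = Tensor θO θI (V k.1) by rw [h])
            (broadcastProd θO θI hsub (U m) (U n))
        else U k.1) (fun a => combine θO θI x y a.1)
      = if k.1 = n then f m * f n else f k.1 := by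
    rintro ⟨k, hk⟩
    by_cases h : k = n
    · subst h
      simp only [dif_pos rfl, if_pos rfl, cast_eq]
      rfl
    · simp [h, hf]
  rw [Finset.prod_congr rfl (fun k _ => hstep k)]
  have h2 : (∏ k : {k : Fin M // k ≠ m}, if k.1 = n then f m * f n else f k.1)
      = ∏ k ∈ Finset.univ.erase m, (if k = n then f m * f n else f k) := by
    rw [Finset.prod_subtype (p := fun k => k ≠ m) (Finset.univ.erase m)
      (fun k => by simp only [Finset.mem_erase, Finset.mem_univ, and_true, Ne])
      (fun k => if k = n then f m * f n else f k)]
  have hnm : n ∈ Finset.univ.erase m := by simp [Ne.symm hmn]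
  rw [h2, ← Finset.mul_prod_erase _ _ hnm, if_pos rfl,
    ← Finset.mul_prod_erase Finset.univ f (Finset.mem_univ m),
    ← Finset.mul_prod_erase _ f hnm,
    Finset.prod_congr rfl (fun k hk => if_neg (Finset.ne_of_mem_erase hk))]
  ring
end

section
/- If v_m ⊆ v_n for some distinct m, n ∈ {1, …, M}, then the representable set 𝕋_V(θ) equals the representable set 𝕋_{V'}(θ), where V' is the vertex list V with the vertex v_m removed. -/
private lemma prod_subtype_ne {M : ℕ} (m : Fin M) (g : Fin M → ℝ) :
    ∏ k : {k : Fin M // k ≠ m}, g k.1 = ∏ k ∈ {m}ᶜ, g k :=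
  (Finset.prod_subtype (p := fun k => k ≠ m) ({m}ᶜ : Finset (Fin M))
    (fun k => by simp) g).symm

/-- Proposition 2, vertex-subset elimination: if `V m ⊆ V n` for some
distinct `m, n`, then the representable set `𝕋_V(θ)` equals the representable set of the
vertex list `V` with the vertex `V m` removed. -/
theorem reprSet_eq_of_vertex_subset {ιO ιI : Type*} [Fintype ιO] [Fintype ιI]
    [DecidableEq ιO] [DecidableEq ιI]
    (θO : ιO → ℕ) (θI : ιI → ℕ) {M : ℕ} (V : Fin M → Finset (ιO ⊕ ιI))
    (m n : Fin M) (hmn : m ≠ n) (hsub : V m ⊆ V n) :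
    reprSet θO θI V = reprSet θO θI (fun k : {k : Fin M // k ≠ m} => V k.1) := by
  classical
  apply Set.eq_of_subset_of_subset
  · rintro _ ⟨U, rfl⟩
    refine ⟨fun k =>
      if hk : k.1 = n then
        (fun z => U n (fun a => z ⟨a.1, by simp [hk]⟩) *
          U m (fun a => z ⟨a.1, by simpa [hk] using hsub a.2⟩))
      else U k.1, ?_⟩
    funext x
    unfold contract
    refine Finset.sum_congr rfl fun y _ => ?_
    set g : Fin M → ℝ := fun k => U k (fun a => combine θO θI x y a.1) with hg
    have hn : n ∈ ({m}ᶜ : Finset (Fin M)) := by simp [hmn.symm]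
    trans (∏ k : {k : Fin M // k ≠ m}, if k.1 = n then g n * g m else g k.1)
    · refine Finset.prod_congr rfl fun k _ => ?_
      by_cases hk : k.1 = n
      · rw [if_pos hk]; exact congrFun (dif_pos hk) _
      · rw [if_neg hk]; exact congrFun (dif_neg hk) _
    rw [prod_subtype_ne m (fun k => if k = n then g n * g m else g k),
      ← Finset.mul_prod_erase _ _ hn, if_pos rfl,
      Finset.prod_congr rfl (fun k hk => if_neg (Finset.ne_of_mem_erase hk)),
      Fintype.prod_eq_prod_compl_mul m g, ← Finset.mul_prod_erase _ g hn]
    ring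
  · rintro _ ⟨U, rfl⟩
    refine ⟨fun k => if hk : k ≠ m then U ⟨k, hk⟩ else fun _ => (1 : ℝ), ?_⟩
    funext x
    unfold contract
    refine Finset.sum_congr rfl fun y _ => ?_
    set g : {k : Fin M // k ≠ m} → ℝ :=
      fun k => U k (fun a => combine θO θI x y a.1) with hg
    trans (∏ k : Fin M, if hk : k ≠ m then g ⟨k, hk⟩ else 1)
    · refine Finset.prod_congr rfl fun k _ => ?_
      by_cases hk : k ≠ m
      · simp only [dif_pos hk]; exact congrFun (dif_pos hk) _
      · simp only [dif_neg hk]; exact congrFun (dif_neg hk) _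
    rw [Fintype.prod_eq_prod_compl_mul m, dif_neg (not_not_intro rfl), mul_one,
      ← prod_subtype_ne m (fun k => if hk : k ≠ m then g ⟨k, hk⟩ else 1)]
    exact Finset.prod_congr rfl fun k _ => dif_pos k.2
end

section
/- Let a, b ∈ ℐ be distinct inner indices that belong to exactly the same vertices, i.e., {m : a ∈ v_m} = {m : b ∈ v_m}. Then the representable set 𝕋_V(θ) equals the representable set 𝕋_{V⊖a}(θ'), where V⊖a = (v_1 \ {a}, …, v_M \ {a}) deletes a from every vertex, the inner index set becomes ℐ \ {a}, and θ' is defined on ι \ {a} by θ'(b) = θ(a) · θ(b) and θ'(c) = θ(c) for all other indices c. -/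
/-! Merging `a` and `b` into one index of dimension `θ a * θ b` (via `finProdFinEquiv`) is a
bijection of inner assignments. Since `a` and `b` lie in the same vertices, on each vertex the
restricted assignments before and after the merge determine each other, so each local tensor of
one network factors through the restriction map of the other and the two contraction maps have
the same image. -/

section Reindex

variable {ιO ιI ιJ : Type*} {θO : ιO → ℕ} {θI : ιI → ℕ} {θJ : ιJ → ℕ}

theorem forall_mem_combine_eq_iff {v : Finset (ιO ⊕ ιI)} {x x' : (o : ιO) → Fin (θO o)}
    {y y' : (i : ιI) → Fin (θI i)} :
    (∀ p ∈ v, combine θO θI x y p = combine θO θI x' y' p) ↔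
      (∀ o, Sum.inl o ∈ v → x o = x' o) ∧ (∀ i, Sum.inr i ∈ v → y i = y' i) := by
  simp only [Sum.forall, combine]
  rfl

variable [Fintype ιO] [Fintype ιI] [Fintype ιJ] [DecidableEq ιO] [DecidableEq ιI] [DecidableEq ιJ]
  {κ : Type*} [Fintype κ] {V : κ → Finset (ιO ⊕ ιI)} {W : κ → Finset (ιO ⊕ ιJ)}

theorem reprSet_subset_of_restrict_determines
    (e : ((i : ιI) → Fin (θI i)) ≃ ((j : ιJ) → Fin (θJ j)))
    (h : ∀ m x y x' y', (∀ q ∈ W m, combine θO θJ x (e y) q = combine θO θJ x' (e y') q) →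
      ∀ p ∈ V m, combine θO θI x y p = combine θO θI x' y' p) :
    reprSet θO θI V ⊆ reprSet θO θJ W := by
  rintro _ ⟨U, rfl⟩
  let restrictW (m : κ) (xy : ((o : ιO) → Fin (θO o)) × ((i : ιI) → Fin (θI i))) :
      (q : W m) → Fin (Sum.elim θO θJ q.1) := fun q => combine θO θJ xy.1 (e xy.2) q.1
  -- `U m` factors through the restriction to `W m`, so it extends to a tensor on `W m`.
  have hfactor (m : κ) : Function.FactorsThrough
      (fun xy => U m (fun p => combine θO θI xy.1 xy.2 p.1)) (restrictW m) := by
    intro xy xy' hxy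
    refine congrArg (U m) (funext fun p => h m _ _ _ _ (fun q hq => ?_) p.1 p.2)
    exact congrFun hxy ⟨q, hq⟩
  refine ⟨fun m => Function.extend (restrictW m)
    (fun xy => U m (fun p => combine θO θI xy.1 xy.2 p.1)) 0, funext fun x => ?_⟩
  simp only [contract]
  rw [← e.sum_comp]
  exact Finset.sum_congr rfl fun y _ => Finset.prod_congr rfl fun m _ =>
    (hfactor m).extend_apply 0 (x, y)

theorem reprSet_eq_of_equiv (e : ((i : ιI) → Fin (θI i)) ≃ ((j : ιJ) → Fin (θJ j)))
    (hO : ∀ m o, Sum.inl o ∈ V m ↔ Sum.inl o ∈ W m)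
    (hI : ∀ m y y', (∀ j, Sum.inr j ∈ W m → e y j = e y' j) ↔ ∀ i, Sum.inr i ∈ V m → y i = y' i) :
    reprSet θO θI V = reprSet θO θJ W := by
  apply (reprSet_subset_of_restrict_determines e fun m x y x' y' => ?_).antisymm
  · refine reprSet_subset_of_restrict_determines e.symm fun m x y x' y' => ?_
    simp only [forall_mem_combine_eq_iff, hO, ← hI, Equiv.apply_symm_apply]
    exact id
  · simp only [forall_mem_combine_eq_iff, hO, hI]
    exact id

end Reindex

section Merge

variable {ιI : Type*} [DecidableEq ιI] (θI : ιI → ℕ) {a b : ιI}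

def mergeDim (a b : ιI) (c : {x : ιI // x ≠ a}) : ℕ :=
  if c.1 = b then θI a * θI b else θI c.1

theorem mergeDim_of_eq {c : {x : ιI // x ≠ a}} (h : c.1 = b) : mergeDim θI a b c = θI a * θI b :=
  if_pos h

theorem mergeDim_of_ne {c : {x : ιI // x ≠ a}} (h : c.1 ≠ b) : mergeDim θI a b c = θI c.1 :=
  if_neg h

def mergeAssign (a b : ιI) (y : (i : ιI) → Fin (θI i)) (c : {x : ιI // x ≠ a}) :
    Fin (mergeDim θI a b c) :=
  if h : c.1 = b then Fin.cast (mergeDim_of_eq θI h).symm (finProdFinEquiv (y a, y b))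
  else Fin.cast (mergeDim_of_ne θI h).symm (y c.1)

variable {θI}

theorem mergeAssign_eq_iff (hab : a ≠ b) {S : Set ιI} (hS : a ∈ S ↔ b ∈ S)
    (y y' : (i : ιI) → Fin (θI i)) :
    (∀ c : {x : ιI // x ≠ a}, c.1 ∈ S → mergeAssign θI a b y c = mergeAssign θI a b y' c) ↔
      ∀ i ∈ S, y i = y' i := by
  constructor
  · intro h i hi
    have hpair : ∀ hb : b ∈ S, y a = y' a ∧ y b = y' b := fun hb => by
      simpa [mergeAssign, Fin.cast_inj] using h ⟨b, hab.symm⟩ hb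
    by_cases hia : i = a
    · subst hia
      exact (hpair (hS.1 hi)).1
    by_cases hib : i = b
    · subst hib
      exact (hpair hi).2
    simpa [mergeAssign, hib, Fin.cast_inj] using h ⟨i, hia⟩ hi
  · intro h c hc
    by_cases hcb : c.1 = b
    · have hb : b ∈ S := hcb ▸ hc
      simp [mergeAssign, hcb, h a (hS.2 hb), h b hb]
    · simp [mergeAssign, hcb, h c.1 hc]

variable (θI) [Fintype ιI]

theorem prod_mergeDim (hab : a ≠ b) : ∏ c, mergeDim θI a b c = ∏ i, θI i := by
  rw [Fintype.prod_eq_mul_prod_subtype_ne θI a]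
  have hsplit (c : {x : ιI // x ≠ a}) :
      mergeDim θI a b c = (if c = ⟨b, hab.symm⟩ then θI a else 1) * θI c.1 := by
    by_cases h : c.1 = b <;> simp [mergeDim, h, Subtype.ext_iff]
  rw [Fintype.prod_congr _ _ hsplit, Finset.prod_mul_distrib, Fintype.prod_ite_eq']

noncomputable def mergeAssignEquiv (hab : a ≠ b) :
    ((i : ιI) → Fin (θI i)) ≃ ((c : {x : ιI // x ≠ a}) → Fin (mergeDim θI a b c)) :=
  Equiv.ofBijective (mergeAssign θI a b) <| by
    refine (Fintype.bijective_iff_injective_and_card _).2 ⟨fun y y' hy => funext fun i => ?_, ?_⟩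
    · exact (mergeAssign_eq_iff hab Iff.rfl y y' (S := Set.univ)).1
        (fun c _ => congrFun hy c) i trivial
    · simp [prod_mergeDim θI hab]

end Merge

/-- Proposition 3, merging a double hyperedge: if two distinct inner
indices `a, b` belong to exactly the same vertices, then the representable set `𝕋_V(θ)`
equals the representable set of `V ⊖ a` (deleting `a` from every vertex) over the inner
index set `ιI \ {a}`, where the dimension of `b` becomes `θI a * θI b` and all other
dimensions are unchanged. -/
theorem reprSet_eq_of_same_hyperedge {ιO ιI : Type*} [Fintype ιO] [Fintype ιI]
    [DecidableEq ιO] [DecidableEq ιI]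
    (θO : ιO → ℕ) (θI : ιI → ℕ) {M : ℕ} (V : Fin M → Finset (ιO ⊕ ιI))
    (a b : ιI) (hab : a ≠ b)
    (hsame : ∀ m : Fin M, Sum.inr a ∈ V m ↔ Sum.inr b ∈ V m) :
    reprSet θO θI V =
      reprSet θO (fun c : {x : ιI // x ≠ a} => if c.1 = b then θI a * θI b else θI c.1)
        (fun m => Finset.univ.filter
          (fun c : ιO ⊕ {x : ιI // x ≠ a} => Sum.map id Subtype.val c ∈ V m)) := by
  refine reprSet_eq_of_equiv (mergeAssignEquiv θI hab) (fun m o => by simp) fun m y y' => ?_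
  simp only [Finset.mem_filter, Finset.mem_univ, true_and, Sum.map_inr]
  exact mergeAssign_eq_iff hab (S := {i | Sum.inr i ∈ V m}) (hsame m) y y'
end

section
/- CP factorization of convolution: let X : ℤ × ℤ × Fin C → ℝ be an input, Ũ : Fin I × Fin Γ → ℝ, Ṽ : Fin J × Fin Γ → ℝ, W̃ : Fin C × Fin Γ → ℝ, S̃ : Fin C' × Fin Γ → ℝ parameters, S ≥ 1 a stride and P a padding. Define the CP kernel T^CP(i,j,c,c') = Σ_{γ ∈ Fin Γ} Ũ(i,γ) Ṽ(j,γ) W̃(c,γ) S̃(c',γ). Define Y(h,w,γ) = Σ_c W̃(c,γ) X(h,w,c); then Z₁(h',w,γ) = Σ_{i ∈ Fin I} Ũ(i,γ) Y((h'−1)S+i−P, w, γ); then Z₂(h',w',γ) = Σ_{j ∈ Fin J} Ṽ(j,γ) Z₁(h', (w'−1)S+j−P, γ); then Z(h',w',c') = Σ_γ S̃(c',γ) Z₂(h',w',γ). Then for all h', w' ∈ ℤ and c' ∈ Fin C', Z(h',w',c') = Σ_{i,j,c} T^CP(i,j,c,c') X((h'−1)S+i−P, (w'−1)S+j−P, c);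 i.e., convolution with the CP kernel equals a 1×1 convolution, then a depthwise vertical I×1 convolution, then a depthwise horizontal 1×J convolution, then a 1×1 convolution. -/
open Finset

section CPContraction

variable {R ι κ μ Γ : Type*} [CommSemiring R] [Fintype ι] [Fintype κ] [Fintype μ] [Fintype Γ]

theorem sum_mul_sum_mul_sum_mul_sum_eq_sum_cp_mul (s : Γ → R) (v : κ → Γ → R) (u : ι → Γ → R)
    (w : μ → Γ → R) (x : ι → κ → μ → R) :
    ∑ γ, s γ * ∑ j, v j γ * ∑ i, u i γ * ∑ c, w c γ * x i j c =
      ∑ i, ∑ j, ∑ c, (∑ γ, u i γ * v j γ * w c γ * s γ) * x i j c := by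
  calc ∑ γ, s γ * ∑ j, v j γ * ∑ i, u i γ * ∑ c, w c γ * x i j c
      = ∑ γ, ∑ i, ∑ j, ∑ c, u i γ * v j γ * w c γ * s γ * x i j c := by
        refine sum_congr rfl fun γ _ => ?_
        simp only [mul_sum]
        rw [sum_comm]
        exact sum_congr rfl fun i _ => sum_congr rfl fun j _ => sum_congr rfl fun c _ => by ring
    _ = ∑ i, ∑ j, ∑ c, ∑ γ, u i γ * v j γ * w c γ * s γ * x i j c := by
        rw [sum_comm]
        refine sum_congr rfl fun i _ => ?_
        rw [sum_comm]
        exact sum_congr rfl fun j _ => sum_comm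
    _ = ∑ i, ∑ j, ∑ c, (∑ γ, u i γ * v j γ * w c γ * s γ) * x i j c := by
        simp only [sum_mul]

end CPContraction

theorem cp_factorization_general {I J Γ C C' : ℕ} (S P : ℤ)
    (X : ℤ → ℤ → Fin C → ℝ)
    (Ut : Fin I → Fin Γ → ℝ) (Vt : Fin J → Fin Γ → ℝ)
    (Wt : Fin C → Fin Γ → ℝ) (St : Fin C' → Fin Γ → ℝ)
    (Tcp : Fin I → Fin J → Fin C → Fin C' → ℝ)
    (hTcp : ∀ i j c c', Tcp i j c c' = ∑ γ : Fin Γ, Ut i γ * Vt j γ * Wt c γ * St c' γ)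
    (Y : ℤ → ℤ → Fin Γ → ℝ)
    (hY : ∀ h w γ, Y h w γ = ∑ c : Fin C, Wt c γ * X h w c)
    (Z₁ : ℤ → ℤ → Fin Γ → ℝ)
    (hZ₁ : ∀ h' w γ, Z₁ h' w γ =
      ∑ i : Fin I, Ut i γ * Y ((h' - 1) * S + ((i : ℕ) : ℤ) - P) w γ)
    (Z₂ : ℤ → ℤ → Fin Γ → ℝ)
    (hZ₂ : ∀ h' w' γ, Z₂ h' w' γ =
      ∑ j : Fin J, Vt j γ * Z₁ h' ((w' - 1) * S + ((j : ℕ) : ℤ) - P) γ)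
    (Z : ℤ → ℤ → Fin C' → ℝ)
    (hZ : ∀ h' w' c', Z h' w' c' = ∑ γ : Fin Γ, St c' γ * Z₂ h' w' γ) :
    ∀ (h' w' : ℤ) (c' : Fin C'),
      Z h' w' c' =
        ∑ i : Fin I, ∑ j : Fin J, ∑ c : Fin C,
          Tcp i j c c' *
            X ((h' - 1) * S + ((i : ℕ) : ℤ) - P) ((w' - 1) * S + ((j : ℕ) : ℤ) - P) c := by
  intro h' w' c'
  simp only [hZ, hZ₂, hZ₁, hY, hTcp]
  exact sum_mul_sum_mul_sum_mul_sum_eq_sum_cp_mul (St c') Vt Ut Wt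
    fun i j c => X ((h' - 1) * S + i - P) ((w' - 1) * S + j - P) c

/-- CP factorization of convolution: convolution with the CP kernel
`T^CP(i,j,c,c') = Σ_γ Ut(i,γ) Vt(j,γ) Wt(c,γ) St(c',γ)` (stride `S ≥ 1`, padding `P`)
equals a 1×1 convolution with `Wt`, a depthwise vertical `I×1` convolution with `Ut`, a
depthwise horizontal `1×J` convolution with `Vt`, and a 1×1 convolution with `St`. -/
theorem cp_factorization {I J Γ C C' : ℕ} (S P : ℤ) (hS : 1 ≤ S)
    (X : ℤ → ℤ → Fin C → ℝ)
    (Ut : Fin I → Fin Γ → ℝ) (Vt : Fin J → Fin Γ → ℝ)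
    (Wt : Fin C → Fin Γ → ℝ) (St : Fin C' → Fin Γ → ℝ)
    (Tcp : Fin I → Fin J → Fin C → Fin C' → ℝ)
    (hTcp : ∀ i j c c', Tcp i j c c' = ∑ γ : Fin Γ, Ut i γ * Vt j γ * Wt c γ * St c' γ)
    (Y : ℤ → ℤ → Fin Γ → ℝ)
    (hY : ∀ h w γ, Y h w γ = ∑ c : Fin C, Wt c γ * X h w c)
    (Z₁ : ℤ → ℤ → Fin Γ → ℝ)
    (hZ₁ : ∀ h' w γ, Z₁ h' w γ =
      ∑ i : Fin I, Ut i γ * Y ((h' - 1) * S + ((i : ℕ) : ℤ) - P) w γ)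
    (Z₂ : ℤ → ℤ → Fin Γ → ℝ)
    (hZ₂ : ∀ h' w' γ, Z₂ h' w' γ =
      ∑ j : Fin J, Vt j γ * Z₁ h' ((w' - 1) * S + ((j : ℕ) : ℤ) - P) γ)
    (Z : ℤ → ℤ → Fin C' → ℝ)
    (hZ : ∀ h' w' c', Z h' w' c' = ∑ γ : Fin Γ, St c' γ * Z₂ h' w' γ) :
    ∀ (h' w' : ℤ) (c' : Fin C'),
      Z h' w' c' =
        ∑ i : Fin I, ∑ j : Fin J, ∑ c : Fin C,
          Tcp i j c c' *
            X ((h' - 1) * S + ((i : ℕ) : ℤ) - P) ((w' - 1) * S + ((j : ℕ) : ℤ) - P) c :=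
  cp_factorization_general S P X Ut Vt Wt St Tcp hTcp Y hY Z₁ hZ₁ Z₂ hZ₂ Z hZ
end
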